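/- Let D₁, ..., Dₘ be positive multiplication operators on L²(X,μ) with D₁⋯Dₘ ≥ I. Then for every positive bounded operator A on L²(X,μ), w(A)^m ≤ w(AD₁)·w(AD₂) ⋯ w(ADₘ). -/

import Mathlib

open MeasureTheory ENNReal

/-- The numerical radius of a bounded operator on `L²(X, μ)`. -/
noncomputable def numRad {X : Type*} [MeasurableSpace X] {μ : Measure X}
    (A : Lp ℂ 2 μ →L[ℂ] Lp ℂ 2 μ) : ℝ :=
  sSup {r : ℝ | ∃ f : Lp ℂ 2 μ, ‖f‖ = 1 ∧ r = ‖(inner ℂ (A f) f : ℂ)‖}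

/-- An operator on `L^p(X, μ)` is positive if it maps a.e. nonnegative functions to
a.e. nonnegative functions. -/
def IsPosOp {X : Type*} [MeasurableSpace X] {μ : Measure X} {p : ℝ≥0∞} [Fact (1 ≤ p)]
    (A : Lp ℂ p μ →L[ℂ] Lp ℂ p μ) : Prop :=
  ∀ f : Lp ℂ p μ, (∀ᵐ x ∂μ, 0 ≤ (f x).re ∧ (f x).im = 0) →
    ∀ᵐ x ∂μ, 0 ≤ ((A f) x).re ∧ ((A f) x).im = 0

/-!
A positive operator satisfies `|A f| ≤ A |f|` pointwise (test `Re (e^{iθ} A f) = Re A (e^{iθ} f)`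
against countably many angles), so `|⟪A f, f⟫| ≤ ⟪A |f|, |f|⟫` and only nonnegative unit
vectors `g` matter. For weights `cᵢ > 0` with `∏ cᵢ = 1`, AM-GM and `∏ dᵢ ≥ 1` give
`g ≤ (1/m) ∑ cᵢ dᵢ g` pointwise, so positivity of `A` yields
`⟪A g, g⟫ ≤ (1/m) ∑ cᵢ ⟪A Dᵢ g, g⟫ ≤ (1/m) ∑ cᵢ w(A Dᵢ)`. The infimum of the right-hand side over
all such weights is the geometric mean `(∏ w(A Dᵢ))^{1/m}`.
-/

open Complex Finset Filter Topology
open scoped ComplexOrder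

theorem Complex.norm_le_of_forall_rat_re_exp_mul_le {z : ℂ} {c : ℝ}
    (h : ∀ q : ℚ, (exp (((q : ℝ) : ℂ) * I) * z).re ≤ c) : ‖z‖ ≤ c := by
  have hall : ∀ θ : ℝ, (exp (θ * I) * z).re ≤ c := fun θ =>
    Rat.denseRange_cast.induction_on θ (isClosed_le (by fun_prop) continuous_const) h
  have hz : exp (((-arg z : ℝ) : ℂ) * I) * z = ‖z‖ := by
    conv_lhs => rw [← norm_mul_exp_arg_mul_I z]
    rw [mul_left_comm, ← exp_add]
    push_cast
    simp
  have := hall (-arg z)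
  rwa [hz, ofReal_re] at this

theorem one_le_inv_card_mul_sum_of_one_le_prod {ι : Type*} [Fintype ι] [Nonempty ι]
    {a : ι → ℝ} (ha : ∀ i, 0 ≤ a i) (h : 1 ≤ ∏ i, a i) :
    1 ≤ (Fintype.card ι : ℝ)⁻¹ * ∑ i, a i := by
  have hn : (0 : ℝ) < Fintype.card ι := by exact_mod_cast Fintype.card_pos
  have := Real.geom_mean_le_arith_mean univ (fun _ => 1) a (fun _ _ => zero_le_one)
    (by simpa using hn) (fun i _ => ha i)
  simp only [Real.rpow_one, sum_const, card_univ, nsmul_eq_mul, mul_one, one_mul] at this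
  rw [inv_mul_eq_div]
  exact (Real.one_le_rpow h (by positivity)).trans this

theorem pow_card_le_prod_of_pos {ι : Type*} [Fintype ι] {s : ℝ} (hs : 0 ≤ s) {t : ι → ℝ}
    (ht : ∀ i, 0 < t i)
    (h : ∀ c : ι → ℝ, (∀ i, 0 < c i) → ∏ i, c i = 1 →
      s ≤ (Fintype.card ι : ℝ)⁻¹ * ∑ i, c i * t i) :
    s ^ Fintype.card ι ≤ ∏ i, t i := by
  set n := Fintype.card ι
  rcases Nat.eq_zero_or_pos n with hn | hn
  · have : IsEmpty ι := Fintype.card_eq_zero_iff.1 hn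
    simp [hn]
  have hP : 0 < ∏ i, t i := prod_pos fun i _ => ht i
  set r := (∏ i, t i) ^ (n⁻¹ : ℝ)
  have hr : r ^ n = ∏ i, t i := Real.rpow_inv_natCast_pow hP.le hn.ne'
  have hsr : s ≤ r := by
    have := h (fun i => r / t i) (fun i => div_pos (by positivity) (ht i))
      (by rw [Finset.prod_div_distrib, prod_const, card_univ, hr, div_self hP.ne'])
    simp only [div_mul_cancel₀ _ (ht _).ne', sum_const, card_univ, nsmul_eq_mul] at this
    rwa [inv_mul_cancel_left₀ (by positivity)] at this
  calc s ^ n ≤ r ^ n := pow_le_pow_left₀ hs hsr n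
    _ = ∏ i, t i := hr

theorem pow_card_le_prod_of_le_inv_card_mul_sum {ι : Type*} [Fintype ι] {s : ℝ} (hs : 0 ≤ s)
    {t : ι → ℝ} (ht : ∀ i, 0 ≤ t i)
    (h : ∀ c : ι → ℝ, (∀ i, 0 < c i) → ∏ i, c i = 1 →
      s ≤ (Fintype.card ι : ℝ)⁻¹ * ∑ i, c i * t i) :
    s ^ Fintype.card ι ≤ ∏ i, t i := by
  have hε : ∀ ε > 0, s ^ Fintype.card ι ≤ ∏ i, (t i + ε) := fun ε hε =>
    pow_card_le_prod_of_pos hs (fun i => by linarith [ht i]) fun c hc hc1 =>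
      (h c hc hc1).trans <| by gcongr with i; exacts [(hc i).le, by linarith]
  have hlim : Tendsto (fun ε => ∏ i, (t i + ε)) (𝓝[>] 0) (𝓝 (∏ i, t i)) := by
    simpa using ((continuous_finsetProd univ fun i _ =>
      continuous_const.add (continuous_id (X := ℝ))).tendsto
      0).mono_left nhdsWithin_le_nhds
  exact ge_of_tendsto hlim (eventually_nhdsWithin_of_forall hε)

namespace MeasureTheory.Lp

variable {X : Type*} [MeasurableSpace X] {μ : Measure X} {p : ℝ≥0∞}

noncomputable def posPartRe (f : Lp ℂ p μ) : Lp ℂ p μ :=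
  (Lp.memLp f).re.pos_part.ofReal.toLp _

theorem coeFn_posPartRe (f : Lp ℂ p μ) :
    posPartRe f =ᵐ[μ] fun x => ((max (f x).re 0 : ℝ) : ℂ) := by
  filter_upwards [MemLp.coeFn_toLp ((Lp.memLp f).re.pos_part.ofReal (K := ℂ))] with x hx
  simp only [posPartRe, hx]
  rfl

theorem posPartRe_nonneg (f : Lp ℂ p μ) : 0 ≤ᵐ[μ] posPartRe f := by
  filter_upwards [coeFn_posPartRe f] with x hx
  simp [hx, zero_le_real]

/-- Since `Re (-I • f) = Im f`, this is `f = (Re f)⁺ - (Re f)⁻ + i ((Im f)⁺ - (Im f)⁻)`. -/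
theorem eq_posPartRe_sub_add_I_smul (f : Lp ℂ p μ) :
    f = (posPartRe f - posPartRe (-f)) + I • (posPartRe (-I • f) - posPartRe (I • f)) := by
  apply ext
  filter_upwards [coeFn_posPartRe f, coeFn_posPartRe (-f), coeFn_posPartRe (-I • f),
    coeFn_posPartRe (I • f), coeFn_neg f, coeFn_smul (-I) f, coeFn_smul I f,
    coeFn_add (posPartRe f - posPartRe (-f)) (I • (posPartRe (-I • f) - posPartRe (I • f))),
    coeFn_sub (posPartRe f) (posPartRe (-f)), coeFn_sub (posPartRe (-I • f)) (posPartRe (I • f)),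
    coeFn_smul I (posPartRe (-I • f) - posPartRe (I • f))]
    with x h₁ h₂ h₃ h₄ h₅ h₆ h₇ h₈ h₉ h₁₀ h₁₁
  simp only [h₁, h₂, h₃, h₄, h₅, h₆, h₇, h₈, h₉, h₁₀, h₁₁, Pi.add_apply, Pi.sub_apply,
    Pi.smul_apply, Pi.neg_apply, smul_eq_mul]
  apply Complex.ext <;> simp

noncomputable def ofRealNorm (f : Lp ℂ p μ) : Lp ℂ p μ :=
  (Lp.memLp f).norm.ofReal.toLp _

theorem coeFn_ofRealNorm (f : Lp ℂ p μ) : ofRealNorm f =ᵐ[μ] fun x => ((‖f x‖ : ℝ) : ℂ) :=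
  MemLp.coeFn_toLp _

theorem ofRealNorm_nonneg (f : Lp ℂ p μ) : 0 ≤ᵐ[μ] ofRealNorm f := by
  filter_upwards [coeFn_ofRealNorm f] with x hx
  simp [hx, zero_le_real]

theorem norm_ofRealNorm (f : Lp ℂ p μ) : ‖ofRealNorm f‖ = ‖f‖ := by
  rw [ofRealNorm, norm_toLp, norm_def]
  congr 1
  exact eLpNorm_congr_norm_ae (by simp)

end MeasureTheory.Lp

namespace IsPosOp

open Lp

variable {X : Type*} [MeasurableSpace X] {μ : Measure X} {p : ℝ≥0∞} [Fact (1 ≤ p)]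
  {A : Lp ℂ p μ →L[ℂ] Lp ℂ p μ}

theorem nonneg_apply (hA : IsPosOp A) {f : Lp ℂ p μ} (hf : 0 ≤ᵐ[μ] f) : 0 ≤ᵐ[μ] A f := by
  have key := hA f (by filter_upwards [hf] with x hx; simpa [nonneg_iff, eq_comm] using hx)
  filter_upwards [key] with x hx
  simpa [nonneg_iff, eq_comm] using hx

theorem mono (hA : IsPosOp A) {u v : Lp ℂ p μ} (h : u ≤ᵐ[μ] v) : A u ≤ᵐ[μ] A v := by
  have hvu : 0 ≤ᵐ[μ] ⇑(v - u) := by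
    filter_upwards [h, Lp.coeFn_sub v u] with x hx hsub
    rw [Pi.zero_apply, hsub, Pi.sub_apply, sub_nonneg]
    exact hx
  filter_upwards [hA.nonneg_apply hvu, Lp.coeFn_sub (A v) (A u)] with x hx hsub
  rwa [Pi.zero_apply, map_sub, hsub, Pi.sub_apply, sub_nonneg] at hx

theorem re_apply_le (hA : IsPosOp A) {u v : Lp ℂ p μ} (hv : 0 ≤ᵐ[μ] v)
    (h : ∀ᵐ x ∂μ, (u x).re ≤ (v x).re) : ∀ᵐ x ∂μ, ((A u) x).re ≤ ((A v) x).re := by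
  have hle : posPartRe u ≤ᵐ[μ] v := by
    filter_upwards [coeFn_posPartRe u, hv, h] with x hx hvx hx'
    rw [Pi.zero_apply, nonneg_iff] at hvx
    rw [hx, Complex.le_def]
    exact ⟨by simpa [hvx.1] using hx', by simpa using hvx.2⟩
  have hAu : A u = (A (posPartRe u) - A (posPartRe (-u))) +
      I • (A (posPartRe (-I • u)) - A (posPartRe (I • u))) := by
    conv_lhs => rw [eq_posPartRe_sub_add_I_smul u]
    simp only [map_add, map_sub, map_smul]
  rw [hAu]
  filter_upwards [hA.mono hle, hA.nonneg_apply (posPartRe_nonneg (-u)),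
    hA.nonneg_apply (posPartRe_nonneg (-I • u)), hA.nonneg_apply (posPartRe_nonneg (I • u)),
    Lp.coeFn_add (A (posPartRe u) - A (posPartRe (-u)))
      (I • (A (posPartRe (-I • u)) - A (posPartRe (I • u)))),
    Lp.coeFn_sub (A (posPartRe u)) (A (posPartRe (-u))),
    Lp.coeFn_sub (A (posPartRe (-I • u))) (A (posPartRe (I • u))),
    Lp.coeFn_smul I (A (posPartRe (-I • u)) - A (posPartRe (I • u)))]
    with x hle₁ h₂ h₃ h₄ e₁ e₂ e₃ e₄
  rw [Pi.zero_apply, nonneg_iff] at h₂ h₃ h₄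
  rw [e₁, Pi.add_apply, e₂, e₄, Pi.smul_apply, e₃]
  simp only [Pi.sub_apply, smul_eq_mul, add_re, sub_re, mul_re, I_re, I_im, sub_im, ← h₃.2,
    ← h₄.2]
  linarith [(Complex.le_def.1 hle₁).1]

theorem norm_apply_le (hA : IsPosOp A) (f : Lp ℂ p μ) :
    ∀ᵐ x ∂μ, ‖(A f) x‖ ≤ ((A (ofRealNorm f)) x).re := by
  have hrot : ∀ q : ℚ, ∀ᵐ x ∂μ,
      (exp (((q : ℝ) : ℂ) * I) * (A f) x).re ≤ ((A (ofRealNorm f)) x).re := by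
    intro q
    set c := exp (((q : ℝ) : ℂ) * I)
    have hcf : ∀ᵐ x ∂μ, ((c • f) x).re ≤ ((ofRealNorm f) x).re := by
      filter_upwards [Lp.coeFn_smul c f, coeFn_ofRealNorm f] with x e₁ e₂
      rw [e₁, e₂, Pi.smul_apply, smul_eq_mul, ofReal_re, ← one_mul ‖f x‖,
        ← norm_exp_ofReal_mul_I (q : ℝ), ← norm_mul]
      exact re_le_norm _
    filter_upwards [hA.re_apply_le (ofRealNorm_nonneg f) hcf, Lp.coeFn_smul c (A f)]
      with x hx e
    rwa [map_smul, e, Pi.smul_apply, smul_eq_mul] at hx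
  filter_upwards [ae_all_iff.2 hrot] with x hx
  exact norm_le_of_forall_rat_re_exp_mul_le hx

end IsPosOp

namespace MeasureTheory.L2

open Lp

variable {X : Type*} [MeasurableSpace X] {μ : Measure X}

theorem re_inner_eq_integral (u v : Lp ℂ 2 μ) :
    (inner ℂ u v).re = ∫ x, (inner ℂ (u x) (v x)).re ∂μ := by
  rw [inner_def]
  exact (integral_re (integrable_inner (𝕜 := ℂ) u v)).symm

theorem re_inner_le_re_inner {u v g : Lp ℂ 2 μ} (hg : 0 ≤ᵐ[μ] g)
    (h : ∀ᵐ x ∂μ, (u x).re ≤ (v x).re) : (inner ℂ u g).re ≤ (inner ℂ v g).re := by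
  rw [re_inner_eq_integral, re_inner_eq_integral]
  refine integral_mono_ae (integrable_inner (𝕜 := ℂ) u g).re
    (integrable_inner (𝕜 := ℂ) v g).re ?_
  filter_upwards [hg, h] with x hgx hx
  rw [Pi.zero_apply, nonneg_iff] at hgx
  simp only [RCLike.inner_apply', mul_re, conj_re, conj_im, ← hgx.2, mul_zero, sub_zero]
  exact mul_le_mul_of_nonneg_right hx hgx.1

theorem norm_inner_le_re_inner_ofRealNorm (u v : Lp ℂ 2 μ) :
    ‖inner ℂ u v‖ ≤ (inner ℂ (ofRealNorm u) (ofRealNorm v)).re :=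
  calc ‖inner ℂ u v‖ = ‖∫ x, inner ℂ (u x) (v x) ∂μ‖ := by rw [inner_def]
    _ ≤ ∫ x, ‖inner ℂ (u x) (v x)‖ ∂μ := norm_integral_le_integral_norm _
    _ = ∫ x, (inner ℂ (ofRealNorm u x) (ofRealNorm v x)).re ∂μ := by
      refine integral_congr_ae ?_
      filter_upwards [coeFn_ofRealNorm u, coeFn_ofRealNorm v] with x hu hv
      simp [hu, hv]
    _ = (inner ℂ (ofRealNorm u) (ofRealNorm v)).re := (re_inner_eq_integral _ _).symm

end MeasureTheory.L2

section NumRad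

variable {X : Type*} [MeasurableSpace X] {μ : Measure X}

theorem bddAbove_numRad_set (T : Lp ℂ 2 μ →L[ℂ] Lp ℂ 2 μ) :
    BddAbove {r : ℝ | ∃ f : Lp ℂ 2 μ, ‖f‖ = 1 ∧ r = ‖(inner ℂ (T f) f : ℂ)‖} := by
  refine ⟨‖T‖, ?_⟩
  rintro r ⟨f, hf, rfl⟩
  simpa [hf] using norm_inner_le_norm (𝕜 := ℂ) (T f) f |>.trans
    (mul_le_mul_of_nonneg_right (T.le_opNorm f) (norm_nonneg f))

theorem norm_inner_le_numRad (T : Lp ℂ 2 μ →L[ℂ] Lp ℂ 2 μ) {f : Lp ℂ 2 μ} (hf : ‖f‖ = 1) :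
    ‖inner ℂ (T f) f‖ ≤ numRad T :=
  le_csSup (bddAbove_numRad_set T) ⟨f, hf, rfl⟩

theorem numRad_nonneg (T : Lp ℂ 2 μ →L[ℂ] Lp ℂ 2 μ) : 0 ≤ numRad T :=
  Real.sSup_nonneg (by rintro _ ⟨f, -, rfl⟩; positivity)

theorem numRad_le {T : Lp ℂ 2 μ →L[ℂ] Lp ℂ 2 μ} {B : ℝ} (hB : 0 ≤ B)
    (h : ∀ f : Lp ℂ 2 μ, ‖f‖ = 1 → ‖inner ℂ (T f) f‖ ≤ B) : numRad T ≤ B :=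
  Real.sSup_le (by rintro _ ⟨f, hf, rfl⟩; exact h f hf) hB

end NumRad

section Cohen

open Lp L2 Fintype

variable {X : Type*} [MeasurableSpace X] {μ : Measure X} {ι : Type*} [Fintype ι] [Nonempty ι]
  {A : Lp ℂ 2 μ →L[ℂ] Lp ℂ 2 μ} {D : ι → (Lp ℂ 2 μ →L[ℂ] Lp ℂ 2 μ)} {d : ι → X → ℝ}
  {c : ι → ℝ}

theorem re_inner_le_inv_card_mul_sum_numRad (hA : IsPosOp A) (hd : ∀ i, ∀ᵐ x ∂μ, 0 ≤ d i x)
    (hD : ∀ i, ∀ f : Lp ℂ 2 μ, (D i f : X → ℂ) =ᵐ[μ] fun x => (d i x : ℂ) * f x)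
    (hprod : ∀ᵐ x ∂μ, 1 ≤ ∏ i, d i x) (hc : ∀ i, 0 < c i) (hc1 : ∏ i, c i = 1)
    {g : Lp ℂ 2 μ} (hg : 0 ≤ᵐ[μ] g) (hg1 : ‖g‖ = 1) :
    (inner ℂ (A g) g).re ≤ (card ι : ℝ)⁻¹ * ∑ i, c i * numRad (A.comp (D i)) := by
  set ψ : Lp ℂ 2 μ := (((card ι : ℝ)⁻¹ : ℝ) : ℂ) • ∑ i, (c i : ℂ) • D i g
  have hψ : ⇑ψ =ᵐ[μ] fun x => (((card ι : ℝ)⁻¹ * ∑ i, c i * d i x : ℝ) : ℂ) * g x := by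
    filter_upwards [Lp.coeFn_smul (((card ι : ℝ)⁻¹ : ℝ) : ℂ) (∑ i, (c i : ℂ) • D i g),
      Lp.coeFn_fun_finsetSum univ fun i => (c i : ℂ) • D i g,
      ae_all_iff.2 fun i => Lp.coeFn_smul (c i : ℂ) (D i g), ae_all_iff.2 fun i => hD i g]
      with x e₁ e₂ e₃ e₄
    simp only [ψ]
    rw [e₁, Pi.smul_apply, e₂]
    simp only [e₃, Pi.smul_apply, e₄, smul_eq_mul, mul_sum]
    push_cast
    rw [sum_mul]
    exact sum_congr rfl fun i _ => by ring
  have hgψ : g ≤ᵐ[μ] ψ := by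
    filter_upwards [hψ, hg, hprod, ae_all_iff.2 hd] with x e hgx hpx hdx
    have hmean := one_le_inv_card_mul_sum_of_one_le_prod (fun i => mul_nonneg (hc i).le (hdx i))
      (by rwa [prod_mul_distrib, hc1, one_mul])
    rw [e]
    exact le_mul_of_one_le_left hgx (by exact_mod_cast hmean)
  calc (inner ℂ (A g) g).re ≤ (inner ℂ (A ψ) g).re :=
        re_inner_le_re_inner hg <| by
          filter_upwards [hA.mono hgψ] with x hx using (Complex.le_def.1 hx).1
    _ = (card ι : ℝ)⁻¹ * ∑ i, c i * (inner ℂ (A (D i g)) g).re := by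
        simp only [ψ, map_smul, map_sum, inner_smul_left, sum_inner, conj_ofReal, re_ofReal_mul,
          re_sum]
    _ ≤ (card ι : ℝ)⁻¹ * ∑ i, c i * numRad (A.comp (D i)) := by
        gcongr with i
        exacts [(hc i).le, (re_le_norm _).trans (norm_inner_le_numRad (A.comp (D i)) hg1)]

theorem numRad_le_inv_card_mul_sum_numRad (hA : IsPosOp A) (hd : ∀ i, ∀ᵐ x ∂μ, 0 ≤ d i x)
    (hD : ∀ i, ∀ f : Lp ℂ 2 μ, (D i f : X → ℂ) =ᵐ[μ] fun x => (d i x : ℂ) * f x)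
    (hprod : ∀ᵐ x ∂μ, 1 ≤ ∏ i, d i x) (hc : ∀ i, 0 < c i) (hc1 : ∏ i, c i = 1) :
    numRad A ≤ (card ι : ℝ)⁻¹ * ∑ i, c i * numRad (A.comp (D i)) := by
  refine numRad_le (mul_nonneg (by positivity)
    (sum_nonneg fun i _ => mul_nonneg (hc i).le (numRad_nonneg _))) fun f hf => ?_
  have hAabs : ∀ᵐ x ∂μ, (ofRealNorm (A f) x).re ≤ (A (ofRealNorm f) x).re := by
    filter_upwards [coeFn_ofRealNorm (A f), hA.norm_apply_le f] with x e h
    rwa [e, ofReal_re]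
  calc ‖inner ℂ (A f) f‖ ≤ (inner ℂ (ofRealNorm (A f)) (ofRealNorm f)).re :=
        norm_inner_le_re_inner_ofRealNorm _ _
    _ ≤ (inner ℂ (A (ofRealNorm f)) (ofRealNorm f)).re :=
        re_inner_le_re_inner (ofRealNorm_nonneg f) hAabs
    _ ≤ _ := re_inner_le_inv_card_mul_sum_numRad hA hd hD hprod hc hc1 (ofRealNorm_nonneg f)
        (by rw [norm_ofRealNorm, hf])

end Cohen

theorem numRad_pow_le_prod_numRad_mul_right
    {X : Type*} [MeasurableSpace X] (μ : Measure X)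
    (m : ℕ) (D : Fin m → (Lp ℂ 2 μ →L[ℂ] Lp ℂ 2 μ)) (d : Fin m → X → ℝ)
    (hd : ∀ i, ∀ᵐ x ∂μ, 0 ≤ d i x)
    (hD : ∀ i, ∀ f : Lp ℂ 2 μ, (D i f : X → ℂ) =ᵐ[μ] fun x => (d i x : ℂ) * f x)
    (hprod : ∀ᵐ x ∂μ, 1 ≤ ∏ i, d i x)
    (A : Lp ℂ 2 μ →L[ℂ] Lp ℂ 2 μ) (hA : IsPosOp A) :
    numRad A ^ m ≤ ∏ i, numRad (A.comp (D i)) := by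
  cases m with
  | zero => simp
  | succ n =>
    simpa using pow_card_le_prod_of_le_inv_card_mul_sum (numRad_nonneg A)
      (fun i => numRad_nonneg _) fun c hc hc1 =>
        numRad_le_inv_card_mul_sum_numRad hA hd hD hprod hc hc1
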